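/- For every integer m, the function e_m on S¹ defined by e_m(v(θ)) = exp(i m θ) is an eigenfunction of K with eigenvalue 1/(1 − 4m²); that is, (K e_m)(v(θ)) = exp(i m θ)/(1 − 4m²) for all θ ∈ ℝ. -/

import Mathlib

/-!
With `c = i m`, the integrand `δ ↦ exp (c (θ + π - 2 arcsin δ))` has the elementary primitive
`exp (c (θ + π - 2 arcsin δ)) (δ - 2 c √(1 - δ²)) / (1 + 4 c²)`: differentiating, the two terms
carrying `c δ / √(1 - δ²)` cancel. The square root vanishes at `δ = ±1`, so the integral is
`(exp (c θ) + exp (c (θ + 2π))) / (1 + 4 c²)`, and `exp (2π i m) = 1` for integer `m`.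
-/

open Real

noncomputable section

/-- The gain operator of the two-dimensional hard-disk linear Boltzmann
equation, acting on (complex-valued) functions of the angle `θ ∈ ℝ`
parameterizing `v(θ) = (cos θ, sin θ) ∈ S¹`:
`(K f)(v(θ)) = (1/2) ∫_{−1}^{1} f(v(θ + π − 2 arcsin δ)) dδ`. -/
def Kangle (f : ℝ → ℂ) (θ : ℝ) : ℂ :=
  (1 / 2 : ℂ) * ∫ δ in (-1:ℝ)..1, f (θ + π - 2 * arcsin δ)

open Complex

def arcsinExpPrimitive (c a : ℂ) (δ : ℝ) : ℂ :=
  exp (c * (a - 2 * arcsin δ)) * (δ - 2 * c * √(1 - δ ^ 2)) / (1 + 4 * c ^ 2)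

lemma continuous_arcsinExpPrimitive (c a : ℂ) : Continuous (arcsinExpPrimitive c a) := by
  unfold arcsinExpPrimitive
  fun_prop

lemma hasDerivAt_arcsinExpPrimitive {c : ℂ} (hc : 1 + 4 * c ^ 2 ≠ 0) (a : ℂ) {x : ℝ}
    (hx : x ∈ Set.Ioo (-1 : ℝ) 1) :
    HasDerivAt (arcsinExpPrimitive c a) (exp (c * (a - 2 * arcsin x))) x := by
  obtain ⟨hx₁, hx₂⟩ := hx
  have hs : 0 < 1 - x ^ 2 := by nlinarith
  have hsqrt : HasDerivAt (fun δ : ℝ => √(1 - δ ^ 2)) (-x / √(1 - x ^ 2)) x := by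
    convert ((hasDerivAt_pow 2 x).const_sub 1).sqrt hs.ne' using 1
    ring
  have harcsin : HasDerivAt (fun δ : ℝ => (arcsin δ : ℂ)) ((1 / √(1 - x ^ 2) : ℝ) : ℂ) x :=
    (hasDerivAt_arcsin hx₁.ne' hx₂.ne).ofReal_comp
  have hexp := (((harcsin.const_mul 2).const_sub a).const_mul c).cexp
  have hpoly := (hasDerivAt_id' x).ofReal_comp.sub (hsqrt.ofReal_comp.const_mul (2 * c))
  refine ((hexp.mul hpoly).div_const (1 + 4 * c ^ 2)).congr_deriv ?_
  have hs' : (√(1 - x ^ 2) : ℂ) ≠ 0 := by exact_mod_cast (Real.sqrt_pos.2 hs).ne'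
  simp only [Pi.sub_apply]
  push_cast
  field_simp
  rw [div_eq_iff (by convert hc using 1; ring)]
  ring

lemma integral_exp_mul_sub_two_arcsin {c : ℂ} (hc : 1 + 4 * c ^ 2 ≠ 0) (a : ℂ) :
    ∫ δ in (-1 : ℝ)..1, exp (c * (a - 2 * arcsin δ))
      = (exp (c * (a - π)) + exp (c * (a + π))) / (1 + 4 * c ^ 2) := by
  rw [intervalIntegral.integral_eq_sub_of_hasDerivAt_of_le (by norm_num)
    (continuous_arcsinExpPrimitive c a).continuousOn
    (fun _ hx => hasDerivAt_arcsinExpPrimitive hc a hx)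
    ((by fun_prop : Continuous fun δ : ℝ => exp (c * (a - 2 * arcsin δ))).intervalIntegrable _ _)]
  simp only [arcsinExpPrimitive, arcsin_one, arcsin_neg, ofReal_div, ofReal_ofNat, ofReal_one,
    ofReal_neg, ne_eq, OfNat.ofNat_ne_zero, not_false_eq_true, mul_div_cancel₀, one_pow, sub_self,
    Real.sqrt_zero, ofReal_zero, mul_zero, sub_zero, mul_one, mul_neg, sub_neg_eq_add, even_two,
    Even.neg_pow]
  ring

lemma one_sub_four_mul_intCast_sq_ne_zero (m : ℤ) : (1 - 4 * (m : ℂ) ^ 2) ≠ 0 := by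
  have : (1 - 4 * m ^ 2 : ℤ) ≠ 0 := by omega
  exact_mod_cast this

/-- for every integer `m`, the function `e_m(v(θ)) = exp(i m θ)`
is an eigenfunction of `K` with eigenvalue `1/(1 − 4m²)`:
`(K e_m)(v(θ)) = exp(i m θ)/(1 − 4m²)` for all `θ ∈ ℝ`. -/
theorem K_eigenfunction_exp (m : ℤ) (θ : ℝ) :
    Kangle (fun t : ℝ => Complex.exp (Complex.I * (m : ℂ) * (t : ℂ))) θ
      = Complex.exp (Complex.I * (m : ℂ) * (θ : ℂ)) / (1 - 4 * (m : ℂ) ^ 2) := by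
  have hc : 1 + 4 * (I * m) ^ 2 = 1 - 4 * (m : ℂ) ^ 2 := by
    linear_combination (4 * (m : ℂ) ^ 2) * I_sq
  have hperiod : exp (I * m * (θ + π + π)) = exp (I * m * θ) := by
    rw [show I * m * (θ + π + π) = I * m * θ + m * (2 * π * I) by ring, Complex.exp_add,
      exp_int_mul_two_pi_mul_I, mul_one]
  simp only [Kangle, ofReal_sub, ofReal_add, ofReal_mul, ofReal_ofNat]
  rw [integral_exp_mul_sub_two_arcsin (hc ▸ one_sub_four_mul_intCast_sq_ne_zero m), hc, hperiod,
    add_sub_cancel_right]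
  ring
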